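/- Let 0 < α ≤ 1, let A : 𝓑 → ℝ be α-Hölder, let ψ_A > 0 be a continuous eigenfunction of L_A with eigenvalue λ_A > 0 such that log ψ_A is α-Hölder, let Ā = A + log ψ_A − log ψ_A ∘ σ − log λ_A, and let m be the unique Borel probability measure fixed by L_Ā^*. Then for every α-Hölder φ : 𝓑 → ℝ, the functions L_A^n(φ)/λ_A^n converge uniformly on 𝓑, as n → ∞, to the function x ↦ ψ_A(x)·∫ (φ/ψ_A) dm. -/

import Mathlib

open MeasureTheory Filter Topology

noncomputable section

instance : Fact (0 < 2 * Real.pi) := ⟨by positivity⟩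

/-- The circle `M = ℝ/2πℤ` with arc-length metric. -/
abbrev Circ : Type := AddCircle (2 * Real.pi)

/-- The normalized Haar (Lebesgue) probability measure on the circle. -/
def haarC : Measure Circ := AddCircle.haarAddCircle

/-- The Bernoulli space `𝓑 = M^ℕ`. -/
abbrev Bs : Type := ℕ → Circ

/-- The left shift `σ`. -/
def shift (x : Bs) : Bs := fun n => x (n + 1)

/-- Prepending a symbol: `cons a x = ax = (a, x₀, x₁, …)`. -/
def cons (a : Circ) (x : Bs) : Bs := fun n =>
  match n with
  | 0 => a
  | k + 1 => x k

/-- The metric `d(x,y) = Σ_k 2^{-k} d_M(x_k, y_k)` on `𝓑`. -/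
def dB (x y : Bs) : ℝ := ∑' k : ℕ, (1 / 2 : ℝ) ^ k * dist (x k) (y k)

/-- `A` is α-Hölder with constant `H` for the metric `dB`. -/
def IsHolderB (α H : ℝ) (A : Bs → ℝ) : Prop := ∀ x y, |A x - A y| ≤ H * dB x y ^ α

/-- The Ruelle operator `L_A ψ (x) = ∫_M e^{A(ax)} ψ(ax) da`. -/
def Ruelle (A : Bs → ℝ) (ψ : Bs → ℝ) : Bs → ℝ :=
  fun x => ∫ a, Real.exp (A (cons a x)) * ψ (cons a x) ∂haarC

/-- `m` is a fixed point of the dual Ruelle operator `L_A^*`. -/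
def FixedDual (A : Bs → ℝ) (m : Measure Bs) : Prop :=
  ∀ ψ : Bs → ℝ, Continuous ψ → (∃ C, ∀ x, |ψ x| ≤ C) →
    ∫ x, Ruelle A ψ x ∂m = ∫ x, ψ x ∂m

/-- The normalized potential `Ā = A + log ψ_A − log ψ_A ∘ σ − log λ_A`. -/
def normPot (A ψ : Bs → ℝ) (lam : ℝ) : Bs → ℝ :=
  fun x => A x + Real.log (ψ x) - Real.log (ψ (shift x)) - Real.log lam

/-!
Conjugating by `ψ` turns `L_A / λ` into the Ruelle operator `L` of the normalized potential `Ā`,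
which fixes constants and preserves `∫ · dm`; so it suffices that the oscillation of `L^n g`
tends to zero for the Hölder function `g = φ / ψ`. A Lasota–Yorke inequality bounds the Hölder
constants of all `L^n g` by one `B`. Since `e^Ā ≥ ε > 0`, `L^n` contains `ε^n` times the plain
average over `n` symbols, which brings the oscillation of a `B`-Hölder function below
`B (2π)^α 2^(-αn)`. Thus `osc (L^(k+n) g) ≤ (1 - ε^n) osc (L^k g) + ε^n B (2π)^α 2^(-αn)`,
and the decreasing sequence `osc (L^k g)` must tend to zero.
-/

open Set

lemma dist_le_pi (a b : Circ) : dist a b ≤ Real.pi := by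
  have h := AddCircle.norm_le_half_period (p := 2 * Real.pi) (x := a - b) (by positivity)
  rw [abs_of_pos (by positivity)] at h
  rw [dist_eq_norm]
  linarith

lemma summable_dB (x y : Bs) : Summable fun k => (1 / 2 : ℝ) ^ k * dist (x k) (y k) :=
  .of_nonneg_of_le (fun k => by positivity)
    (fun k => mul_le_mul_of_nonneg_left (dist_le_pi _ _) (by positivity))
    (summable_geometric_two.mul_right Real.pi)

lemma dB_nonneg (x y : Bs) : 0 ≤ dB x y := tsum_nonneg fun k => by positivity

lemma dB_comm (x y : Bs) : dB x y = dB y x := by simp only [dB, dist_comm]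

lemma dB_le_two_pi (x y : Bs) : dB x y ≤ 2 * Real.pi := by
  calc dB x y ≤ ∑' k : ℕ, (1 / 2 : ℝ) ^ k * Real.pi :=
        (summable_dB x y).tsum_le_tsum
          (fun k => mul_le_mul_of_nonneg_left (dist_le_pi _ _) (by positivity))
          (summable_geometric_two.mul_right Real.pi)
    _ = 2 * Real.pi := by rw [tsum_mul_right, tsum_geometric_two]

lemma dB_cons (a b : Circ) (x y : Bs) : dB (cons a x) (cons b y) = dist a b + dB x y / 2 := by
  rw [dB, (summable_dB _ _).tsum_eq_zero_add, dB, ← tsum_div_const]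
  congr 1
  · simp [cons]
  · congr 1
    funext k
    simp only [cons, pow_succ]
    ring

lemma shift_cons (a : Circ) (x : Bs) : shift (cons a x) = x := rfl

lemma cons_head_shift (x : Bs) : cons (x 0) (shift x) = x := by
  funext n
  cases n <;> rfl

lemma dB_shift_le (x y : Bs) : dB (shift x) (shift y) ≤ 2 * dB x y := by
  have h := dB_cons (x 0) (y 0) (shift x) (shift y)
  rw [cons_head_shift, cons_head_shift] at h
  linarith [dist_nonneg (x := x 0) (y := y 0)]

lemma continuous_dB (x : Bs) : Continuous (dB x) :=
  continuous_tsum (fun k => continuous_const.mul (continuous_const.dist (continuous_apply k)))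
    (summable_geometric_two.mul_right Real.pi)
    (fun k y => by
      rw [Real.norm_of_nonneg (by positivity)]
      exact mul_le_mul_of_nonneg_left (dist_le_pi _ _) (by positivity))

lemma continuous_cons_uncurry : Continuous fun p : Circ × Bs => cons p.1 p.2 :=
  continuous_pi fun n => by
    cases n with
    | zero => exact continuous_fst
    | succ k => exact (continuous_apply k).comp continuous_snd

namespace IsHolderB

variable {α C D : ℝ} {f g : Bs → ℝ}

lemma mono (h : IsHolderB α C f) (hCD : C ≤ D) : IsHolderB α D f := fun x y =>
  (h x y).trans (mul_le_mul_of_nonneg_right hCD (Real.rpow_nonneg (dB_nonneg x y) α))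

lemma nonneg (h : IsHolderB α C f) : 0 ≤ C := by
  set a : Circ := ↑(2 * Real.pi / 2)
  have hd : dB (cons a 0) (cons 0 0) = Real.pi := by
    rw [dB_cons, dist_zero_right, AddCircle.norm_half_period_eq, abs_of_pos (by positivity)]
    simp [dB]
  have hpos : 0 < dB (cons a 0) (cons 0 0) ^ α := by rw [hd]; positivity
  exact nonneg_of_mul_nonneg_left ((abs_nonneg _).trans (h _ _)) hpos

lemma continuous (hα : 0 < α) (h : IsHolderB α C f) : Continuous f := by
  refine continuous_iff_continuousAt.2 fun x => tendsto_iff_dist_tendsto_zero.2 ?_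
  have hd : Tendsto (fun y => C * dB x y ^ α) (𝓝 x) (𝓝 0) := by
    have := ((continuous_dB x).rpow_const fun _ => Or.inr hα.le).const_mul C |>.tendsto x
    simpa [dB, Real.zero_rpow hα.ne'] using this
  refine squeeze_zero (fun _ => dist_nonneg) (fun y => ?_) hd
  rw [Real.dist_eq, dB_comm]
  exact h y x

lemma add (hf : IsHolderB α C f) (hg : IsHolderB α D g) :
    IsHolderB α (C + D) fun x => f x + g x := fun x y =>
  calc |f x + g x - (f y + g y)| ≤ |f x - f y| + |g x - g y| := by
        rw [add_sub_add_comm]; exact abs_add_le _ _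
    _ ≤ (C + D) * dB x y ^ α := by rw [add_mul]; exact add_le_add (hf x y) (hg x y)

lemma neg (hf : IsHolderB α C f) : IsHolderB α C fun x => -f x := fun x y => by
  rw [← abs_neg, neg_sub_neg, neg_sub]; exact hf x y

lemma sub (hf : IsHolderB α C f) (hg : IsHolderB α D g) :
    IsHolderB α (C + D) fun x => f x - g x := by
  simpa only [sub_eq_add_neg] using hf.add hg.neg

lemma sub_const (hf : IsHolderB α C f) (c : ℝ) : IsHolderB α C fun x => f x - c := fun x y => by
  rw [sub_sub_sub_cancel_right]; exact hf x y

lemma comp_shift (hα : 0 ≤ α) (hf : IsHolderB α C f) :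
    IsHolderB α (2 ^ α * C) fun x => f (shift x) := fun x y =>
  calc |f (shift x) - f (shift y)| ≤ C * dB (shift x) (shift y) ^ α := hf _ _
    _ ≤ C * (2 * dB x y) ^ α :=
        mul_le_mul_of_nonneg_left (Real.rpow_le_rpow (dB_nonneg _ _) (dB_shift_le x y) hα)
          hf.nonneg
    _ = 2 ^ α * C * dB x y ^ α := by rw [Real.mul_rpow zero_le_two (dB_nonneg x y)]; ring

lemma comp_locallyLipschitz (hα : 0 < α) (hf : IsHolderB α C f) {F : ℝ → ℝ}
    (hF : LocallyLipschitz F) : ∃ K, IsHolderB α K fun x => F (f x) := by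
  obtain ⟨K, hK⟩ := (hF.locallyLipschitzOn (s := range f)).exists_lipschitzOnWith_of_compact
    (isCompact_range (hf.continuous hα))
  refine ⟨K * C, fun x y => ?_⟩
  calc |F (f x) - F (f y)| ≤ K * |f x - f y| :=
        hK.dist_le_mul _ (mem_range_self x) _ (mem_range_self y)
    _ ≤ K * C * dB x y ^ α := by rw [mul_assoc]; exact mul_le_mul_of_nonneg_left (hf x y) K.2

lemma mul (hα : 0 < α) (hf : IsHolderB α C f) (hg : IsHolderB α D g) :
    ∃ K, IsHolderB α K fun x => f x * g x := by
  obtain ⟨Bf, hBf⟩ := (isCompact_range (hf.continuous hα)).isBounded.exists_norm_le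
  obtain ⟨Bg, hBg⟩ := (isCompact_range (hg.continuous hα)).isBounded.exists_norm_le
  refine ⟨Bf * D + Bg * C, fun x y => ?_⟩
  have hfx : |f x| ≤ Bf := hBf _ (mem_range_self x)
  have hgy : |g y| ≤ Bg := hBg _ (mem_range_self y)
  calc |f x * g x - f y * g y| = |f x * (g x - g y) + g y * (f x - f y)| := by ring_nf
    _ ≤ |f x| * |g x - g y| + |g y| * |f x - f y| := by
        rw [← abs_mul, ← abs_mul]; exact abs_add_le _ _
    _ ≤ Bf * (D * dB x y ^ α) + Bg * (C * dB x y ^ α) := by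
        gcongr
        · exact (abs_nonneg _).trans hfx
        · exact hg x y
        · exact (abs_nonneg _).trans hgy
        · exact hf x y
    _ = (Bf * D + Bg * C) * dB x y ^ α := by ring

end IsHolderB

instance : IsProbabilityMeasure haarC := by
  unfold haarC; infer_instance

def IsNormalized (E : Bs → ℝ) : Prop := ∀ x, ∫ a, Real.exp (E (cons a x)) ∂haarC = 1

section Ruelle

variable {E u v : Bs → ℝ}

lemma ruelle_const_mul (c : ℝ) (u : Bs → ℝ) :
    Ruelle E (fun z => c * u z) = fun x => c * Ruelle E u x := by
  funext x
  simp only [Ruelle, ← integral_const_mul]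
  congr 1; funext a; ring

lemma ruelle_nonneg (hu : 0 ≤ u) : 0 ≤ Ruelle E u := fun _ =>
  integral_nonneg fun _ => mul_nonneg (Real.exp_pos _).le (hu _)

variable (hE : Continuous E)
include hE

lemma continuous_ruelle_integrand (hu : Continuous u) :
    Continuous fun p : Circ × Bs => Real.exp (E (cons p.1 p.2)) * u (cons p.1 p.2) :=
  (Real.continuous_exp.comp (hE.comp continuous_cons_uncurry)).mul (hu.comp continuous_cons_uncurry)

lemma integrable_ruelle_integrand (hu : Continuous u) (x : Bs) :
    Integrable (fun a => Real.exp (E (cons a x)) * u (cons a x)) haarC :=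
  ((continuous_ruelle_integrand hE hu).comp (continuous_id.prodMk continuous_const))
    |>.integrable_of_hasCompactSupport (HasCompactSupport.of_compactSpace _)

lemma continuous_ruelle (hu : Continuous u) : Continuous (Ruelle E u) := by
  have h := continuous_parametric_integral_of_continuous (μ := haarC)
    (f := fun x a => Real.exp (E (cons a x)) * u (cons a x))
    ((continuous_ruelle_integrand hE hu).comp continuous_swap) isCompact_univ
  rw [Measure.restrict_univ] at h
  exact h

lemma ruelle_mono (hu : Continuous u) (hv : Continuous v) (huv : u ≤ v) :
    Ruelle E u ≤ Ruelle E v := fun x =>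
  integral_mono (integrable_ruelle_integrand hE hu x) (integrable_ruelle_integrand hE hv x)
    fun _ => mul_le_mul_of_nonneg_left (huv _) (Real.exp_pos _).le

lemma ruelle_add (hu : Continuous u) (hv : Continuous v) :
    Ruelle E (fun z => u z + v z) = fun x => Ruelle E u x + Ruelle E v x := by
  funext x
  simp only [Ruelle, mul_add]
  exact integral_add (integrable_ruelle_integrand hE hu x) (integrable_ruelle_integrand hE hv x)

lemma continuous_iterate_ruelle (hu : Continuous u) (n : ℕ) :
    Continuous ((Ruelle E)^[n] u) := by
  induction n with
  | zero => exact hu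
  | succ n ih => rw [Function.iterate_succ_apply']; exact continuous_ruelle hE ih

end Ruelle

section Compact

variable {X : Type*} [TopologicalSpace X] [CompactSpace X] {u : X → ℝ}

lemma exists_abs_le_of_continuous (hu : Continuous u) : ∃ C, ∀ x, |u x| ≤ C := by
  obtain ⟨C, hC⟩ := (isCompact_range hu).isBounded.exists_norm_le
  exact ⟨C, fun x => hC _ (mem_range_self x)⟩

lemma le_iSup_of_continuous (hu : Continuous u) (x : X) : u x ≤ ⨆ z, u z :=
  le_ciSup (isCompact_range hu).bddAbove x

lemma iInf_le_of_continuous (hu : Continuous u) (x : X) : ⨅ z, u z ≤ u x :=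
  ciInf_le (isCompact_range hu).bddBelow x

end Compact

def osc (u : Bs → ℝ) : ℝ := (⨆ x, u x) - ⨅ x, u x

section Osc

variable {u : Bs → ℝ}

lemma sub_le_osc (hu : Continuous u) (x y : Bs) : u x - u y ≤ osc u :=
  sub_le_sub (le_iSup_of_continuous hu x) (iInf_le_of_continuous hu y)

lemma osc_nonneg (hu : Continuous u) : 0 ≤ osc u := by
  simpa using sub_le_osc hu (fun _ => 0) (fun _ => 0)

lemma osc_le {c : ℝ} (h : ∀ x y, u x - u y ≤ c) : osc u ≤ c := by
  have : (⨆ x, u x) ≤ c + ⨅ y, u y :=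
    ciSup_le fun x => by
      have : u x - c ≤ ⨅ y, u y := le_ciInf fun y => by linarith [h x y]
      linarith
  unfold osc
  linarith

end Osc

lemma isNormalized_zero : IsNormalized 0 := fun _ => by simp

section Normalized

variable {E u : Bs → ℝ} (hn : IsNormalized E) (hE : Continuous E)
include hn

lemma ruelle_const (c : ℝ) : Ruelle E (fun _ => c) = fun _ => c := by
  funext x
  simp only [Ruelle, integral_mul_const, hn x, one_mul]

include hE

lemma ruelle_affine (hu : Continuous u) (a b : ℝ) :
    Ruelle E (fun z => a * u z + b) = fun x => a * Ruelle E u x + b := by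
  rw [ruelle_add (u := fun z => a * u z) hE (continuous_const.mul hu) continuous_const,
    ruelle_const hn, ruelle_const_mul]

lemma iterate_ruelle_affine (hu : Continuous u) (a b : ℝ) (n : ℕ) :
    (Ruelle E)^[n] (fun z => a * u z + b) = fun x => a * (Ruelle E)^[n] u x + b := by
  induction n with
  | zero => rfl
  | succ n ih =>
    simp only [Function.iterate_succ_apply', ih,
      ruelle_affine hn hE (continuous_iterate_ruelle hE hu n)]

lemma iInf_le_ruelle (hu : Continuous u) (x : Bs) : ⨅ z, u z ≤ Ruelle E u x := by
  have h := ruelle_mono hE continuous_const hu (iInf_le_of_continuous hu) x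
  rwa [ruelle_const hn] at h

lemma ruelle_le_iSup (hu : Continuous u) (x : Bs) : Ruelle E u x ≤ ⨆ z, u z := by
  have h := ruelle_mono hE hu continuous_const (le_iSup_of_continuous hu) x
  rwa [ruelle_const hn] at h

lemma osc_ruelle_le (hu : Continuous u) : osc (Ruelle E u) ≤ osc u :=
  osc_le fun x y => sub_le_sub (ruelle_le_iSup hn hE hu x) (iInf_le_ruelle hn hE hu y)

lemma osc_iterate_ruelle_le (hu : Continuous u) (n : ℕ) : osc ((Ruelle E)^[n] u) ≤ osc u := by
  induction n with
  | zero => exact le_rfl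
  | succ n ih =>
    rw [Function.iterate_succ_apply']
    exact (osc_ruelle_le hn hE (continuous_iterate_ruelle hE hu n)).trans ih

end Normalized

section LasotaYorke

variable {α C Hw : ℝ} {E u : Bs → ℝ} (hn : IsNormalized E) (hE : Continuous E)
include hn hE

lemma ruelle_sub_ruelle_le (hw : IsHolderB α Hw fun z => Real.exp (E z))
    (hu : IsHolderB α C u) (huc : Continuous u) (x y : Bs) :
    Ruelle E u x - Ruelle E u y ≤ (C + Hw * osc u) / 2 ^ α * dB x y ^ α := by
  set i := ⨅ z, u z
  set δ := (dB x y / 2) ^ α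
  have hδ : δ = dB x y ^ α / 2 ^ α := Real.div_rpow (dB_nonneg x y) zero_le_two α
  -- `L_E` fixes constants, so we may pass to `v = u - inf u`, which takes values in `[0, osc u]`.
  set v : Bs → ℝ := fun z => u z - i
  have hv : ∀ x, Ruelle E v x = Ruelle E u x - i := fun x => by
    simpa [v, sub_eq_add_neg] using congrFun (ruelle_affine hn hE huc 1 (-i)) x
  have hvc : Continuous v := huc.sub continuous_const
  have hpt : ∀ a, Real.exp (E (cons a x)) * v (cons a x) - Real.exp (E (cons a y)) * v (cons a y)
      ≤ Real.exp (E (cons a x)) * (C * δ) + Hw * δ * osc u := fun a => by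
    have hd : dB (cons a x) (cons a y) = dB x y / 2 := by rw [dB_cons, dist_self, zero_add]
    have hvd : v (cons a x) - v (cons a y) ≤ C * δ := by
      simpa [v, hd] using (le_abs_self _).trans (hu (cons a x) (cons a y))
    have hwd : Real.exp (E (cons a x)) - Real.exp (E (cons a y)) ≤ Hw * δ := by
      simpa [hd] using (le_abs_self _).trans (hw (cons a x) (cons a y))
    have hv0 : 0 ≤ v (cons a y) := sub_nonneg.2 (iInf_le_of_continuous huc _)
    have hvO : v (cons a y) ≤ osc u := sub_le_sub_right (le_iSup_of_continuous huc _) i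
    calc _ = Real.exp (E (cons a x)) * (v (cons a x) - v (cons a y))
          + (Real.exp (E (cons a x)) - Real.exp (E (cons a y))) * v (cons a y) := by ring
      _ ≤ _ := add_le_add (mul_le_mul_of_nonneg_left hvd (Real.exp_pos _).le)
          (mul_le_mul hwd hvO hv0 (mul_nonneg hw.nonneg
            (Real.rpow_nonneg (div_nonneg (dB_nonneg x y) zero_le_two) α)))
  calc Ruelle E u x - Ruelle E u y = Ruelle E v x - Ruelle E v y := by rw [hv, hv]; ring
    _ = ∫ a, (Real.exp (E (cons a x)) * v (cons a x)
          - Real.exp (E (cons a y)) * v (cons a y)) ∂haarC :=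
        (integral_sub (integrable_ruelle_integrand hE hvc x)
          (integrable_ruelle_integrand hE hvc y)).symm
    _ ≤ ∫ a, (Real.exp (E (cons a x)) * (C * δ) + Hw * δ * osc u) ∂haarC :=
        integral_mono ((integrable_ruelle_integrand hE hvc x).sub
          (integrable_ruelle_integrand hE hvc y))
          ((integrable_ruelle_integrand hE continuous_const x).add (integrable_const _)) hpt
    _ = (C + Hw * osc u) / 2 ^ α * dB x y ^ α := by
        rw [integral_add (integrable_ruelle_integrand hE continuous_const x) (integrable_const _),
          integral_mul_const, hn x, integral_const, hδ]
        simp only [probReal_univ, one_smul]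
        ring

lemma isHolderB_ruelle (hw : IsHolderB α Hw fun z => Real.exp (E z))
    (hu : IsHolderB α C u) (huc : Continuous u) :
    IsHolderB α ((C + Hw * osc u) / 2 ^ α) (Ruelle E u) := fun x y =>
  abs_sub_le_iff.2 ⟨ruelle_sub_ruelle_le hn hE hw hu huc x y,
    dB_comm x y ▸ ruelle_sub_ruelle_le hn hE hw hu huc y x⟩

lemma isHolderB_iterate_ruelle (hα : 0 < α) (hw : IsHolderB α Hw fun z => Real.exp (E z))
    (hu : IsHolderB α C u) (n : ℕ) :
    IsHolderB α (C + Hw * osc u / (2 ^ α - 1)) ((Ruelle E)^[n] u) := by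
  have huc := hu.continuous hα
  have hq : 1 < (2 : ℝ) ^ α := Real.one_lt_rpow one_lt_two hα
  set K := Hw * osc u / (2 ^ α - 1)
  have hK : K * (2 ^ α - 1) = Hw * osc u := div_mul_cancel₀ _ (by linarith)
  induction n with
  | zero => exact hu.mono (le_add_of_nonneg_right (div_nonneg
      (mul_nonneg hw.nonneg (osc_nonneg huc)) (by linarith)))
  | succ n ih =>
    rw [Function.iterate_succ_apply']
    refine (isHolderB_ruelle hn hE hw ih (continuous_iterate_ruelle hE huc n)).mono ?_
    rw [div_le_iff₀ (by linarith)]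
    have hosc := mul_le_mul_of_nonneg_left (osc_iterate_ruelle_le hn hE huc n) hw.nonneg
    have hC := mul_le_mul_of_nonneg_left hq.le hu.nonneg
    linarith

end LasotaYorke

lemma isHolderB_iterate_ruelle_zero {α C : ℝ} {u : Bs → ℝ} (hu : IsHolderB α C u)
    (huc : Continuous u) (n : ℕ) :
    IsHolderB α (C / (2 ^ α) ^ n) ((Ruelle 0)^[n] u) := by
  have hw : IsHolderB α 0 fun z => Real.exp ((0 : Bs → ℝ) z) := fun x y => by simp
  induction n with
  | zero => simpa using hu
  | succ n ih =>
    rw [Function.iterate_succ_apply', pow_succ, ← div_div]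
    simpa using isHolderB_ruelle isNormalized_zero continuous_zero hw ih
      (continuous_iterate_ruelle continuous_zero huc n)

lemma iterate_ruelle_nonneg {E h : Bs → ℝ} (hh : 0 ≤ h) (n : ℕ) : 0 ≤ (Ruelle E)^[n] h := by
  induction n with
  | zero => exact hh
  | succ n ih => rw [Function.iterate_succ_apply']; exact ruelle_nonneg ih

section Doeblin

variable {ε : ℝ} {E u h : Bs → ℝ} (hE : Continuous E) (hε : ∀ z, ε ≤ Real.exp (E z))
include hE hε

lemma mul_ruelle_zero_le (hh : Continuous h) (hh0 : 0 ≤ h) (x : Bs) :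
    ε * Ruelle 0 h x ≤ Ruelle E h x := by
  rw [Ruelle, ← integral_const_mul]
  refine integral_mono ((integrable_ruelle_integrand continuous_zero hh x).const_mul ε)
    (integrable_ruelle_integrand hE hh x) fun a => ?_
  simpa using mul_le_mul_of_nonneg_right (hε (cons a x)) (hh0 (cons a x))

lemma pow_mul_iterate_ruelle_zero_le (hε0 : 0 ≤ ε) (hh : Continuous h) (hh0 : 0 ≤ h) (n : ℕ)
    (x : Bs) : ε ^ n * (Ruelle 0)^[n] h x ≤ (Ruelle E)^[n] h x := by
  induction n generalizing x with
  | zero => simp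
  | succ n ih =>
    have hLn := continuous_iterate_ruelle hE hh n
    calc ε ^ (n + 1) * (Ruelle 0)^[n + 1] h x
        = ε * Ruelle 0 (fun z => ε ^ n * (Ruelle 0)^[n] h z) x := by
          rw [ruelle_const_mul, Function.iterate_succ_apply', pow_succ]; ring
      _ ≤ ε * Ruelle 0 ((Ruelle E)^[n] h) x :=
          mul_le_mul_of_nonneg_left (ruelle_mono continuous_zero
            (continuous_const.mul (continuous_iterate_ruelle continuous_zero hh n)) hLn ih x) hε0
      _ ≤ (Ruelle E)^[n + 1] h x := by
          rw [Function.iterate_succ_apply']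
          exact mul_ruelle_zero_le hE hε hLn (iterate_ruelle_nonneg hh0 n) x

/-- Doeblin's bound: as `e^E ≥ ε`, `L_E^n` dominates `ε ^ n` times the plain average `L_0^n`. -/
lemma iterate_ruelle_sub_le (hn : IsNormalized E) (hε0 : 0 ≤ ε) (hu : Continuous u) (n : ℕ)
    (x y : Bs) :
    (Ruelle E)^[n] u x - (Ruelle E)^[n] u y
      ≤ (1 - ε ^ n) * osc u + ε ^ n * ((Ruelle 0)^[n] u x - (Ruelle 0)^[n] u y) := by
  set s := ⨆ z, u z
  set i := ⨅ z, u z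
  have hup := pow_mul_iterate_ruelle_zero_le hE hε hε0 (continuous_const.mul hu |>.add
    continuous_const) (fun z => by simpa using le_iSup_of_continuous hu z) n x
    (h := fun z => -1 * u z + s)
  have hlow := pow_mul_iterate_ruelle_zero_le hE hε hε0 (continuous_const.mul hu |>.add
    continuous_const) (fun z => by simpa using iInf_le_of_continuous hu z) n y
    (h := fun z => 1 * u z + -i)
  rw [iterate_ruelle_affine hn hE hu, iterate_ruelle_affine isNormalized_zero continuous_zero hu]
    at hup hlow
  unfold osc
  linarith

end Doeblin

lemma tendsto_zero_of_antitone_of_le_mul_add {s p c : ℕ → ℝ} (hs : Antitone s)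
    (hs0 : ∀ k, 0 ≤ s k) (hp : ∀ n, 0 < p n) (hc : Tendsto c atTop (𝓝 0))
    (h : ∀ n k, s (k + n) ≤ (1 - p n) * s k + p n * c n) : Tendsto s atTop (𝓝 0) := by
  have hS := tendsto_atTop_ciInf hs ⟨0, by rintro _ ⟨k, rfl⟩; exact hs0 k⟩
  have hSc : ∀ n, ⨅ k, s k ≤ c n := fun n => by
    have := le_of_tendsto_of_tendsto' (hS.comp (tendsto_add_atTop_nat n))
      ((hS.const_mul (1 - p n)).add_const (p n * c n)) (h n)
    nlinarith [hp n]
  have hS0 : ⨅ k, s k = 0 := le_antisymm (ge_of_tendsto' hc hSc) (le_ciInf hs0)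
  rwa [hS0] at hS

theorem tendsto_osc_iterate_ruelle {α HE C : ℝ} {E u : Bs → ℝ} (hα : 0 < α)
    (hn : IsNormalized E) (hE : IsHolderB α HE E) (hu : IsHolderB α C u) :
    Tendsto (fun k => osc ((Ruelle E)^[k] u)) atTop (𝓝 0) := by
  have hEc := hE.continuous hα
  have huc := hu.continuous hα
  obtain ⟨Hw, hw⟩ := hE.comp_locallyLipschitz hα (Real.contDiff_exp (n := 1)).locallyLipschitz
  obtain ⟨z₀, -, hz₀⟩ := isCompact_univ.exists_isMinOn univ_nonempty
    (Real.continuous_exp.comp hEc).continuousOn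
  set ε := Real.exp (E z₀)
  have hε : ∀ z, ε ≤ Real.exp (E z) := fun z => hz₀ (mem_univ z)
  set B := C + Hw * osc u / (2 ^ α - 1)
  have hq : 1 < (2 : ℝ) ^ α := Real.one_lt_rpow one_lt_two hα
  refine tendsto_zero_of_antitone_of_le_mul_add (p := fun n => ε ^ n)
    (c := fun n => B / (2 ^ α) ^ n * (2 * Real.pi) ^ α)
    (antitone_nat_of_succ_le fun k => ?_) (fun k => osc_nonneg
      (continuous_iterate_ruelle hEc huc k)) (fun n => by positivity) ?_ fun n k => ?_
  · rw [Function.iterate_succ_apply']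
    exact osc_ruelle_le hn hEc (continuous_iterate_ruelle hEc huc k)
  · simpa using (tendsto_const_nhds.div_atTop (tendsto_pow_atTop_atTop_of_one_lt hq)).mul_const
      ((2 * Real.pi) ^ α)
  · rw [add_comm, Function.iterate_add_apply]
    refine osc_le fun x y => ?_
    have hv := continuous_iterate_ruelle hEc huc k
    have hT := isHolderB_iterate_ruelle_zero (isHolderB_iterate_ruelle hn hEc hα hw hu k) hv n
    have hTxy : (Ruelle 0)^[n] ((Ruelle E)^[k] u) x - (Ruelle 0)^[n] ((Ruelle E)^[k] u) y
        ≤ B / (2 ^ α) ^ n * (2 * Real.pi) ^ α :=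
      (le_abs_self _).trans ((hT x y).trans (mul_le_mul_of_nonneg_left
        (Real.rpow_le_rpow (dB_nonneg x y) (dB_le_two_pi x y) hα.le) hT.nonneg))
    exact (iterate_ruelle_sub_le hEc hε hn (Real.exp_pos _).le hv n x y).trans
      (add_le_add_right (mul_le_mul_of_nonneg_left hTxy (pow_nonneg (Real.exp_pos _).le n)) _)

lemma integral_iterate_ruelle {E u : Bs → ℝ} {m : Measure Bs} (hE : Continuous E)
    (hfix : FixedDual E m) (hu : Continuous u) (n : ℕ) :
    ∫ x, (Ruelle E)^[n] u x ∂m = ∫ x, u x ∂m := by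
  induction n with
  | zero => rfl
  | succ n ih =>
    have hv := continuous_iterate_ruelle hE hu n
    rw [Function.iterate_succ_apply', hfix _ hv (exists_abs_le_of_continuous hv), ih]

lemma abs_sub_integral_le_osc {u : Bs → ℝ} (m : Measure Bs) [IsProbabilityMeasure m]
    (hu : Continuous u) (x : Bs) : |u x - ∫ y, u y ∂m| ≤ osc u := by
  have hint : Integrable u m :=
    hu.integrable_of_hasCompactSupport (HasCompactSupport.of_compactSpace _)
  have hlow : ⨅ z, u z ≤ ∫ y, u y ∂m := by
    simpa using integral_mono (integrable_const _) hint (iInf_le_of_continuous hu)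
  have hup : ∫ y, u y ∂m ≤ ⨆ z, u z := by
    simpa using integral_mono hint (integrable_const _) (le_iSup_of_continuous hu)
  have := iInf_le_of_continuous hu x
  have := le_iSup_of_continuous hu x
  rw [abs_sub_le_iff]
  unfold osc
  constructor <;> linarith

theorem tendstoUniformly_iterate_ruelle {α HE C : ℝ} {E u : Bs → ℝ} {m : Measure Bs}
    [IsProbabilityMeasure m] (hα : 0 < α) (hn : IsNormalized E) (hE : IsHolderB α HE E)
    (hfix : FixedDual E m) (hu : IsHolderB α C u) :
    TendstoUniformly (fun n => (Ruelle E)^[n] u) (fun _ => ∫ y, u y ∂m) atTop := by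
  rw [Metric.tendstoUniformly_iff]
  intro δ hδ
  filter_upwards [(tendsto_osc_iterate_ruelle hα hn hE hu).eventually (gt_mem_nhds hδ)]
    with n hn x
  have hv := continuous_iterate_ruelle (hE.continuous hα) (hu.continuous hα) n
  rw [dist_comm, Real.dist_eq, ← integral_iterate_ruelle (hE.continuous hα) hfix
    (hu.continuous hα) n]
  exact (abs_sub_integral_le_osc m hv x).trans_lt hn

lemma TendstoUniformly.mul_left_of_abs_le {ι X : Type*} {l : Filter ι} {F : ι → X → ℝ}
    {f ψ : X → ℝ} {Ψ : ℝ} (h : TendstoUniformly F f l) (hψ : ∀ x, |ψ x| ≤ Ψ) :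
    TendstoUniformly (fun n x => ψ x * F n x) (fun x => ψ x * f x) l := by
  rw [Metric.tendstoUniformly_iff] at h ⊢
  intro δ hδ
  have hΨ : 0 < |Ψ| + 1 := by positivity
  filter_upwards [h (δ / (|Ψ| + 1)) (by positivity)] with n hn x
  rw [Real.dist_eq, ← mul_sub, abs_mul, ← Real.dist_eq]
  calc |ψ x| * dist (f x) (F n x) ≤ (|Ψ| + 1) * dist (f x) (F n x) :=
        mul_le_mul_of_nonneg_right ((hψ x).trans ((le_abs_self Ψ).trans (by linarith)))
          dist_nonneg
    _ < (|Ψ| + 1) * (δ / (|Ψ| + 1)) := mul_lt_mul_of_pos_left (hn x) hΨ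
    _ = δ := mul_div_cancel₀ δ hΨ.ne'

section NormalizedPotential

variable {A ψ : Bs → ℝ} {lam : ℝ}

lemma exp_normPot_cons (hψ : ∀ x, 0 < ψ x) (hlam : 0 < lam) (a : Circ) (x : Bs) :
    Real.exp (normPot A ψ lam (cons a x))
      = Real.exp (A (cons a x)) * ψ (cons a x) / (lam * ψ x) := by
  rw [normPot, shift_cons, Real.exp_sub, Real.exp_sub, Real.exp_add, Real.exp_log (hψ _),
    Real.exp_log (hψ x), Real.exp_log hlam, div_div, mul_comm (ψ x)]

lemma ruelle_normPot_div (hψ : ∀ x, 0 < ψ x) (hlam : 0 < lam) (f : Bs → ℝ) (x : Bs) :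
    Ruelle (normPot A ψ lam) (fun z => f z / ψ z) x = Ruelle A f x / (lam * ψ x) := by
  rw [Ruelle, Ruelle, ← integral_div]
  congr 1
  funext a
  rw [exp_normPot_cons hψ hlam]
  field_simp [(hψ (cons a x)).ne']

lemma iterate_ruelle_normPot_div (hψ : ∀ x, 0 < ψ x) (hlam : 0 < lam) (f : Bs → ℝ) (n : ℕ)
    (x : Bs) :
    (Ruelle (normPot A ψ lam))^[n] (fun z => f z / ψ z) x
      = (Ruelle A)^[n] f x / (lam ^ n * ψ x) := by
  induction n generalizing x with
  | zero => simp
  | succ n ih =>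
    have h : (Ruelle (normPot A ψ lam))^[n] (fun z => f z / ψ z)
        = fun z => (lam ^ n)⁻¹ * (Ruelle A)^[n] f z / ψ z := by
      funext z; rw [ih]; field_simp
    rw [Function.iterate_succ_apply', h, ruelle_normPot_div hψ hlam, ruelle_const_mul,
      Function.iterate_succ_apply', pow_succ]
    field_simp

lemma isNormalized_normPot (hψ : ∀ x, 0 < ψ x) (hlam : 0 < lam)
    (heig : ∀ x, Ruelle A ψ x = lam * ψ x) : IsNormalized (normPot A ψ lam) := fun x => by
  have h := ruelle_normPot_div (A := A) hψ hlam ψ x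
  rw [heig, div_self (mul_pos hlam (hψ x)).ne'] at h
  simpa [Ruelle, div_self (hψ _).ne'] using h

lemma IsHolderB.normPot {α H Hψ : ℝ} (hα : 0 ≤ α) (hA : IsHolderB α H A)
    (hψ : IsHolderB α Hψ fun x => Real.log (ψ x)) :
    IsHolderB α (H + Hψ + 2 ^ α * Hψ) (normPot A ψ lam) :=
  ((hA.add hψ).sub (hψ.comp_shift hα)).sub_const _

lemma IsHolderB.exists_div {α C Hψ : ℝ} {φ : Bs → ℝ} (hα : 0 < α) (hφ : IsHolderB α C φ)
    (hψ : ∀ x, 0 < ψ x) (hψlog : IsHolderB α Hψ fun x => Real.log (ψ x)) :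
    ∃ K, IsHolderB α K fun x => φ x / ψ x := by
  obtain ⟨Ki, hinv⟩ := hψlog.neg.comp_locallyLipschitz hα
    (Real.contDiff_exp (n := 1)).locallyLipschitz
  obtain ⟨K, hK⟩ := hφ.mul hα hinv
  refine ⟨K, ?_⟩
  simpa only [Real.exp_neg, Real.exp_log (hψ _), ← div_eq_mul_inv] using hK

end NormalizedPotential

theorem iterates_div_eigenvalue_tendsto_general (α H : ℝ) (hα0 : 0 < α)
    (A : Bs → ℝ) (hA : IsHolderB α H A)
    (ψ : Bs → ℝ) (hψc : Continuous ψ) (hψpos : ∀ x, 0 < ψ x)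
    (Hψ : ℝ) (hψlog : IsHolderB α Hψ (fun x => Real.log (ψ x)))
    (lam : ℝ) (hlam : 0 < lam) (heig : ∀ x, Ruelle A ψ x = lam * ψ x)
    (m : Measure Bs) (hm : IsProbabilityMeasure m)
    (hfix : FixedDual (normPot A ψ lam) m)
    (φ : Bs → ℝ) (Cφ : ℝ) (hφ : IsHolderB α Cφ φ) :
    TendstoUniformly (fun n x => (Ruelle A)^[n] φ x / lam ^ n)
      (fun x => ψ x * ∫ y, φ y / ψ y ∂m) atTop := by
  obtain ⟨K, hg⟩ := hφ.exists_div hα0 hψpos hψlog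
  obtain ⟨Ψ, hΨ⟩ := exists_abs_le_of_continuous hψc
  have hconv := tendstoUniformly_iterate_ruelle hα0 (isNormalized_normPot hψpos hlam heig)
    (hA.normPot hα0.le hψlog) hfix hg
  have hconj : (fun n x => (Ruelle A)^[n] φ x / lam ^ n)
      = fun n x => ψ x * (Ruelle (normPot A ψ lam))^[n] (fun y => φ y / ψ y) x := by
    funext n x
    rw [iterate_ruelle_normPot_div hψpos hlam]
    field_simp [(hψpos x).ne']
  rw [hconj]
  exact hconv.mul_left_of_abs_le hΨ

/-- for every α-Hölder `φ`, `L_A^n(φ)/λ_A^n` converges uniformly to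
`x ↦ ψ_A(x) ∫ (φ/ψ_A) dm`. -/
theorem iterates_div_eigenvalue_tendsto (α H : ℝ) (hα0 : 0 < α) (hα1 : α ≤ 1)
    (A : Bs → ℝ) (hA : IsHolderB α H A)
    (ψ : Bs → ℝ) (hψc : Continuous ψ) (hψpos : ∀ x, 0 < ψ x)
    (Hψ : ℝ) (hψlog : IsHolderB α Hψ (fun x => Real.log (ψ x)))
    (lam : ℝ) (hlam : 0 < lam) (heig : ∀ x, Ruelle A ψ x = lam * ψ x)
    (m : Measure Bs) (hm : IsProbabilityMeasure m)
    (hfix : FixedDual (normPot A ψ lam) m)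
    (hmuniq : ∀ m' : Measure Bs, IsProbabilityMeasure m' →
      FixedDual (normPot A ψ lam) m' → m' = m)
    (φ : Bs → ℝ) (Cφ : ℝ) (hφ : IsHolderB α Cφ φ) :
    TendstoUniformly (fun n x => (Ruelle A)^[n] φ x / lam ^ n)
      (fun x => ψ x * ∫ y, φ y / ψ y ∂m) atTop :=
  iterates_div_eigenvalue_tendsto_general α H hα0 A hA ψ hψc hψpos Hψ hψlog lam hlam heig m hm hfix
    φ Cφ hφ
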